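/- Let F_n^2 (n ≥ 4) be the filiform Leibniz algebra with [e_1,e_1] = e_3 and [e_i,e_1] = e_{i+1} for 3 ≤ i ≤ n−1. A linear map D : F_n^2 → F_n^2 is an anti-derivation if and only if there exist scalars β_1,…,β_{n+2} such that D(e_1) = Σ_{j=1}^n β_j e_j, D(e_2) = β_{n+1}e_2 + β_{n+2}e_n, and D(e_i) = 0 for 3 ≤ i ≤ n. -/

import Mathlib

/-!
Right multiplication `S = [·, e₁]` (`F2br.shift`) shifts `e₁ ↦ e₃ ↦ e₄ ↦ ⋯ ↦ eₙ ↦ 0` and kills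
`e₂`, and the bracket is `[x, y] = y₁ • S x`. With `y = e₁` the anti-derivation identity becomes
`D (S x) = S (D x) - x₁ • S (D e₁)`. For `x = e₁` this gives `D e₃ = 0`, for `x = eᵢ` with
`i ≥ 3` it gives `D eᵢ₊₁ = S (D eᵢ) = 0` inductively, and for `x = e₂` it gives `S (D e₂) = 0`,
i.e. `D e₂ ∈ ker S = span {e₂, eₙ}`. Conversely such a `D` vanishes on `im S = span {e₃, …, eₙ}`
and satisfies `S (D x) = x₁ • S (D e₁)`, which makes both sides of the identity zero.
-/

/-- The bracket of the filiform Leibniz algebra `F_n^2`: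
`[e_1,e_1] = e_3`, `[e_i,e_1] = e_{i+1}` for `3 ≤ i ≤ n−1`
(here `e_i` is `Pi.single (i-1) 1`). -/
def F2br (n : ℕ) (x y : Fin n → ℂ) : Fin n → ℂ := fun i =>
  if h2 : (i : ℕ) = 2 then
    y ⟨0, by have := i.isLt; omega⟩ * x ⟨0, by have := i.isLt; omega⟩
  else if h3 : 3 ≤ (i : ℕ) then
    y ⟨0, by have := i.isLt; omega⟩ * x ⟨(i : ℕ) - 1, by have := i.isLt; omega⟩
  else 0

theorem LinearMap.apply_eq_zero_of_forall_single {R M ι : Type*} [Semiring R]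
    [AddCommMonoid M] [Module R M] [Fintype ι] [DecidableEq ι] (f : (ι → R) →ₗ[R] M)
    {v : ι → R} (h : ∀ i, v i = 0 ∨ f (Pi.single i 1) = 0) : f v = 0 := by
  rw [← Finset.univ_sum_single v, map_sum]
  refine Finset.sum_eq_zero fun i _ => ?_
  rw [← mul_one (v i), ← smul_eq_mul, Pi.single_smul', map_smul]
  rcases h i with hi | hi <;> simp [hi]

namespace F2br

variable {R : Type*} [CommRing R] {n : ℕ}

/-- Right multiplication `x ↦ [x, e₁]` of `F_n^2`, over any commutative ring. -/
def shift : (Fin n → R) →ₗ[R] (Fin n → R) where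
  toFun x i :=
    if (i : ℕ) = 2 then x ⟨0, by have := i.isLt; omega⟩
    else if h : 3 ≤ (i : ℕ) then x ⟨i - 1, by have := i.isLt; omega⟩ else 0
  map_add' x y := by
    ext i; simp only [Pi.add_apply]; split_ifs <;> simp
  map_smul' c x := by
    ext i; simp only [Pi.smul_apply, smul_eq_mul, RingHom.id_apply]; split_ifs <;> simp

theorem eq_smul_shift (h0 : 0 < n) (x y : Fin n → ℂ) :
    F2br n x y = y ⟨0, h0⟩ • shift x := by
  ext i; simp only [F2br, shift, LinearMap.coe_mk, AddHom.coe_mk, Pi.smul_apply, smul_eq_mul]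
  split_ifs <;> simp

theorem shift_apply_eq_zero_of_lt_two (v : Fin n → R) (i : Fin n) (hi : (i : ℕ) < 2) :
    shift v i = 0 := by
  simp only [shift, LinearMap.coe_mk, AddHom.coe_mk]; split_ifs <;> grind

theorem shift_single_zero (hn : 2 < n) :
    shift (Pi.single (⟨0, by omega⟩ : Fin n) (1 : R)) = Pi.single ⟨2, hn⟩ 1 := by
  ext i; simp only [shift, LinearMap.coe_mk, AddHom.coe_mk, Pi.single_apply, Fin.ext_iff]
  split_ifs <;> grind

theorem shift_single_one (hn : 1 < n) :
    shift (Pi.single (⟨1, hn⟩ : Fin n) (1 : R)) = 0 := by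
  ext i
  simp only [shift, LinearMap.coe_mk, AddHom.coe_mk, Pi.single_apply, Fin.ext_iff, Pi.zero_apply]
  split_ifs <;> grind

theorem shift_single_of_two_le {k : ℕ} (hk : 2 ≤ k) (hkn : k + 1 < n) :
    shift (Pi.single (⟨k, by omega⟩ : Fin n) (1 : R)) = Pi.single ⟨k + 1, hkn⟩ 1 := by
  ext i; simp only [shift, LinearMap.coe_mk, AddHom.coe_mk, Pi.single_apply, Fin.ext_iff]
  split_ifs <;> grind

theorem shift_eq_zero_iff (hn : 2 < n) (v : Fin n → R) :
    shift v = 0 ↔ ∀ j : Fin n, (j : ℕ) ≠ 1 → (j : ℕ) ≠ n - 1 → v j = 0 := by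
  constructor
  · rintro h ⟨j, hj⟩ hj1 hjn
    dsimp only at hj1 hjn
    rcases Nat.eq_zero_or_pos j with rfl | hj0
    · simpa [shift] using congrFun h ⟨2, hn⟩
    · have := congrFun h ⟨j + 1, by omega⟩
      simp only [shift, LinearMap.coe_mk, AddHom.coe_mk, Pi.zero_apply] at this
      rwa [if_neg (by omega), dif_pos (by omega)] at this
  · intro h
    ext i
    have hi := i.isLt
    simp only [shift, LinearMap.coe_mk, AddHom.coe_mk, Pi.zero_apply]
    split_ifs <;> first | rfl | exact h _ (by dsimp only; omega) (by dsimp only; omega)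

/-- The anti-derivation identity of `F_n^2` over `R`, with the bracket written as in
`F2br.eq_smul_shift`. -/
def IsAntiDerivation (h0 : 0 < n) (D : (Fin n → R) →ₗ[R] (Fin n → R)) : Prop :=
  ∀ x y : Fin n → R,
    D (y ⟨0, h0⟩ • shift x) = y ⟨0, h0⟩ • shift (D x) - x ⟨0, h0⟩ • shift (D y)

namespace IsAntiDerivation

variable {D : (Fin n → R) →ₗ[R] (Fin n → R)}

theorem map_shift {h0 : 0 < n} (hD : IsAntiDerivation h0 D) (x : Fin n → R) :
    D (shift x) = shift (D x) - x ⟨0, h0⟩ • shift (D (Pi.single ⟨0, h0⟩ 1)) := by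
  simpa using hD x (Pi.single ⟨0, h0⟩ 1)

theorem map_single_eq_zero (hn : 2 < n) (hD : IsAntiDerivation (by omega) D) (i : Fin n)
    (hi : 2 ≤ (i : ℕ)) : D (Pi.single i 1) = 0 := by
  obtain ⟨m, hm⟩ := i
  dsimp only at hi
  induction m, hi using Nat.le_induction with
  | base => simpa [shift_single_zero hn] using hD.map_shift (Pi.single ⟨0, by omega⟩ 1)
  | succ k hk ih =>
    have := hD.map_shift (Pi.single ⟨k, by omega⟩ 1)
    rwa [shift_single_of_two_le hk hm, ih (by omega), map_zero,
      Pi.single_eq_of_ne (by simp; omega), zero_smul, sub_zero] at this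

theorem shift_map_single_one (hn : 1 < n) (hD : IsAntiDerivation (by omega) D) :
    shift (D (Pi.single ⟨1, hn⟩ 1)) = 0 := by
  have := hD.map_shift (Pi.single ⟨1, hn⟩ 1)
  rwa [shift_single_one, map_zero, Pi.single_eq_of_ne (by simp), zero_smul, sub_zero,
    eq_comm] at this

end IsAntiDerivation

theorem apply_eq_smul_add_smul_of_map_single_eq_zero {M : Type*} [AddCommGroup M] [Module R M]
    (hn : 1 < n) {f : (Fin n → R) →ₗ[R] M} (hf : ∀ i : Fin n, 2 ≤ (i : ℕ) → f (Pi.single i 1) = 0)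
    (x : Fin n → R) :
    f x = x ⟨0, by omega⟩ • f (Pi.single ⟨0, by omega⟩ 1) +
      x ⟨1, hn⟩ • f (Pi.single ⟨1, hn⟩ 1) := by
  rw [← sub_eq_zero, ← map_smul, ← map_smul, ← map_add, ← map_sub]
  refine f.apply_eq_zero_of_forall_single fun i => ?_
  by_cases hi : 2 ≤ (i : ℕ)
  · exact Or.inr (hf i hi)
  · left
    simp only [Pi.sub_apply, Pi.add_apply, Pi.smul_apply, Pi.single_apply, Fin.ext_iff,
      smul_eq_mul]
    split_ifs <;> grind

theorem isAntiDerivation_of_map_single_eq_zero (hn : 2 < n) {D : (Fin n → R) →ₗ[R] (Fin n → R)}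
    (hzero : ∀ i : Fin n, 2 ≤ (i : ℕ) → D (Pi.single i 1) = 0)
    (hker : shift (D (Pi.single ⟨1, by omega⟩ 1)) = 0) : IsAntiDerivation (by omega) D := by
  have shift_map (v : Fin n → R) :
      shift (D v) = v ⟨0, by omega⟩ • shift (D (Pi.single ⟨0, by omega⟩ 1)) := by
    rw [apply_eq_smul_add_smul_of_map_single_eq_zero (by omega) hzero v, map_add, map_smul,
      map_smul, hker, smul_zero, add_zero]
  intro x y
  have map_shift : D (shift x) = 0 := D.apply_eq_zero_of_forall_single fun i =>
    if hi : 2 ≤ (i : ℕ) then Or.inr (hzero i hi)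
    else Or.inl (shift_apply_eq_zero_of_lt_two x i (by omega))
  rw [map_smul, map_shift, smul_zero, shift_map x, shift_map y, smul_smul, smul_smul, mul_comm,
    sub_self]

theorem isAntiDerivation_iff (hn : 2 < n) (D : (Fin n → R) →ₗ[R] (Fin n → R)) :
    IsAntiDerivation (by omega) D ↔
      (∀ i : Fin n, 2 ≤ (i : ℕ) → D (Pi.single i 1) = 0) ∧
        shift (D (Pi.single ⟨1, by omega⟩ 1)) = 0 :=
  ⟨fun hD => ⟨hD.map_single_eq_zero hn, hD.shift_map_single_one (by omega)⟩,
    fun ⟨hzero, hker⟩ => isAntiDerivation_of_map_single_eq_zero hn hzero hker⟩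

end F2br

/-- characterization of the anti-derivations of `F_n^2`. -/
theorem F2_antiderivation_characterization (n : ℕ) (hn : 4 ≤ n)
    (D : (Fin n → ℂ) →ₗ[ℂ] (Fin n → ℂ)) :
    (∀ x y : Fin n → ℂ, D (F2br n x y) = F2br n (D x) y - F2br n (D y) x) ↔
    (∃ β : Fin (n + 2) → ℂ,
      (∀ j : Fin n, D (Pi.single ⟨0, by omega⟩ 1) j = β ⟨(j : ℕ), by have := j.isLt; omega⟩) ∧
      (∀ j : Fin n, D (Pi.single ⟨1, by omega⟩ 1) j =
        if (j : ℕ) = 1 then β ⟨n, by omega⟩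
        else if (j : ℕ) = n - 1 then β ⟨n + 1, by omega⟩
        else 0) ∧
      (∀ i : Fin n, 2 ≤ (i : ℕ) → D (Pi.single i 1) = 0)) := by
  simp_rw [F2br.eq_smul_shift (show 0 < n by omega)]
  rw [← F2br.IsAntiDerivation, F2br.isAntiDerivation_iff (by omega),
    F2br.shift_eq_zero_iff (by omega)]
  constructor
  · rintro ⟨hzero, hker⟩
    refine ⟨Fin.append (D (Pi.single ⟨0, by omega⟩ 1))
      ![D (Pi.single ⟨1, by omega⟩ 1) ⟨1, by omega⟩,
        D (Pi.single ⟨1, by omega⟩ 1) ⟨n - 1, by omega⟩],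
      fun j => (Fin.append_left _ _ j).symm, fun j => ?_, hzero⟩
    split_ifs with hj1 hjn
    · rw [show j = ⟨1, by omega⟩ from Fin.ext hj1]
      exact (Fin.append_right (D (Pi.single ⟨0, by omega⟩ 1)) ![_, _] 0).symm
    · rw [show j = ⟨n - 1, by omega⟩ from Fin.ext hjn]
      exact (Fin.append_right (D (Pi.single ⟨0, by omega⟩ 1)) ![_, _] 1).symm
    · exact hker j hj1 hjn
  · rintro ⟨β, -, hβ, hzero⟩
    exact ⟨hzero, fun j hj1 hjn => by rw [hβ j, if_neg hj1, if_neg hjn]⟩
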